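/- (Mattarei's Lemma) Let G be a finite group containing no nontrivial solvable normal subgroup. Then there exist non-abelian simple groups T_1, …, T_r and positive integers n_1, …, n_r such that G contains a subgroup isomorphic to T_1^{n_1} × ⋯ × T_r^{n_r} and G is isomorphic to a subgroup of Aut(T_1^{n_1} × ⋯ × T_r^{n_r}). -/

import Mathlib

/-!
Let `S` be maximal among the normal subgroups of `G` generated by a set of pairwise commuting
nonabelian simple subgroups. A minimal normal subgroup `B` of `G` is not solvable, hence not
abelian; a maximal commuting set of minimal normal subgroups of `B` contains all of them, so its
members are simple and generate the normal subgroup `B`. Hence if `B` met `S` trivially, `S ⊔ B`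
would contradict the maximality of `S`, so every nontrivial normal subgroup meets `S`. Since
`S ⊓ C_G(S)` is abelian and normal, it is trivial, so `C_G(S) = 1`. Thus `S` is the direct product
of its simple factors (all `nᵢ = 1`), and conjugation embeds `G` into `Aut S`.
-/

open Subgroup

section

variable {G : Type*} [Group G]

namespace Subgroup

theorem le_centralizer_of_le_normalizer_of_disjoint {H K : Subgroup G}
    (hH : H ≤ normalizer K) (hK : K ≤ normalizer H) (hHK : Disjoint H K) :
    H ≤ centralizer K :=
  commutator_eq_bot_iff_le_centralizer.mp <| eq_bot_iff.mpr <|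
    (le_inf (le_normalizer_iff_commutator_le_left.mp hK)
      (le_normalizer_iff_commutator_le_right.mp hH)).trans hHK.le_bot

theorem isSolvable_of_le_centralizer {K : Subgroup G} (hK : K ≤ centralizer K) :
    Group.IsSolvable K :=
  Group.isSolvable_of_comm fun a b => Subtype.ext (mem_centralizer_iff.mp (hK b.2) a a.2)

theorem exists_mul_ne_mul_of_disjoint_centralizer {K : Subgroup G} [Nontrivial K]
    (hK : Disjoint K (centralizer K)) : ∃ a b : K, a * b ≠ b * a := by
  by_contra! hcomm
  refine (nontrivial_iff_ne_bot K).mp ‹_› (hK.symm.eq_bot_of_ge fun b hb => ?_)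
  exact mem_centralizer_iff.mpr fun a ha => congrArg Subtype.val (hcomm ⟨a, ha⟩ ⟨b, hb⟩)

theorem isSimpleGroup_of_forall_le_normalizer {K : Subgroup G} (hK : K ≠ ⊥)
    (h : ∀ N ≤ K, K ≤ normalizer N → N = ⊥ ∨ N = K) : IsSimpleGroup K := by
  have := (nontrivial_iff_ne_bot K).mpr hK
  refine ⟨fun H hH => ?_⟩
  have hHN : (H.map K.subtype).subgroupOf K = H :=
    comap_map_eq_self_of_injective K.subtype_injective H
  rw [← hHN] at hH ⊢
  rcases h _ (map_subtype_le H) ((normal_subgroupOf_iff_le_normalizer (map_subtype_le H)).mp hH)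
    with hbot | htop
  · left; rw [hbot, bot_subgroupOf]
  · right; rw [htop, subgroupOf_self]

theorem sSup_le_of_pairwise_le_centralizer {s : Set (Subgroup G)}
    (hs : s.Pairwise fun H K => H ≤ centralizer K) {K M : Subgroup G} (hK : K ∈ s)
    (hKM : K ≤ M) (hM : centralizer K ≤ M) : sSup s ≤ M :=
  sSup_le fun L hL => by
    rcases eq_or_ne L K with rfl | hne
    · exact hKM
    · exact (hs hL hK hne).trans hM

theorem normal_sSup_of_map_conj_mem {s : Set (Subgroup G)}
    (hs : ∀ g : G, ∀ H ∈ s, H.map (MulAut.conj g).toMonoidHom ∈ s) : (sSup s).Normal := by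
  have hle : ∀ g : G, (sSup s).map (MulAut.conj g).toMonoidHom ≤ sSup s := fun g =>
    map_le_iff_le_comap.mpr <| sSup_le fun H hH => map_le_iff_le_comap.mp (le_sSup (hs g H hH))
  exact ⟨fun n hn g => hle g ⟨n, hn, rfl⟩⟩

noncomputable def noncommPiCoprodEquiv {ι : Type*} [Fintype ι] {K : ι → Subgroup G}
    (hcomm : Pairwise fun i j => ∀ x y : G, x ∈ K i → y ∈ K j → Commute x y)
    (hind : iSupIndep K) : (∀ i, K i) ≃* (⨆ i, K i : Subgroup G) :=
  (MonoidHom.ofInjective (injective_noncommPiCoprod_of_iSupIndep (hcomm := hcomm) hind)).trans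
    (MulEquiv.subgroupCongr noncommPiCoprod_range)

def minimalNormalIn (A : Subgroup G) : Set (Subgroup G) :=
  {T | Minimal (fun H : Subgroup G => H ≠ ⊥ ∧ H ≤ A ∧ A ≤ normalizer H) T}

section minimalNormalIn

variable {A : Subgroup G}

theorem le_or_disjoint_of_mem_minimalNormalIn {T U : Subgroup G} (hT : T ∈ minimalNormalIn A)
    (hU : A ≤ normalizer U) : T ≤ U ∨ Disjoint T U := by
  by_cases hTU : T ⊓ U = ⊥
  · exact Or.inr (disjoint_iff.mpr hTU)
  · refine Or.inl (le_inf_iff.mp (hT.2 ⟨hTU, inf_le_left.trans hT.1.2.1, ?_⟩ inf_le_left)).2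
    exact (le_inf hT.1.2.2 hU).trans inf_normalizer_le_normalizer_inf

theorem map_mem_minimalNormalIn (φ : G ≃* G) (hA : A.map φ.toMonoidHom = A) {T : Subgroup G}
    (hT : T ∈ minimalNormalIn A) : T.map φ.toMonoidHom ∈ minimalNormalIn A := by
  have key : ∀ U : Subgroup G, (U.map φ.toMonoidHom ≠ ⊥ ∧ U.map φ.toMonoidHom ≤ A ∧
      A ≤ normalizer (U.map φ.toMonoidHom : Set G)) ↔ (U ≠ ⊥ ∧ U ≤ A ∧ A ≤ normalizer U) := by
    intro U
    conv_lhs => rw [← map_equiv_normalizer_eq, ← hA]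
    have hφ : Function.Injective φ.toMonoidHom := φ.injective
    simp only [ne_eq, map_eq_bot_iff_of_injective _ hφ, map_le_map_iff_of_injective hφ]
  refine ⟨(key T).mpr hT.1, fun U hU hUT => map_le_iff_le_comap.mpr (hT.2 ?_ ?_)⟩
  · refine (key _).mp ?_
    rwa [map_comap_eq_self_of_surjective φ.surjective]
  · exact (comap_mono hUT).trans (comap_map_eq_self_of_injective φ.injective T).le

theorem exists_pairwise_le_centralizer_subset_minimalNormalIn [Finite G] (A : Subgroup G) :
    ∃ s ⊆ minimalNormalIn A, s.Pairwise (fun H K => H ≤ centralizer K) ∧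
      ∀ T ∈ minimalNormalIn A, T ≤ sSup s := by
  obtain ⟨s, ⟨hsA, hs⟩, hmax⟩ := exists_maximal_of_wellFoundedGT
    (fun s => s ⊆ minimalNormalIn A ∧ s.Pairwise (fun H K => H ≤ centralizer K))
    ⟨∅, Set.empty_subset _, Set.pairwise_empty _⟩
  refine ⟨s, hsA, hs, fun T hT => ?_⟩
  have hDA : sSup s ≤ A := sSup_le fun K hK => (hsA hK).1.2.1
  have hAD : A ≤ normalizer (sSup s : Subgroup G) := by
    rw [sSup_eq_iSup']
    exact (le_iInf fun K => (hsA K.2).1.2.2).trans (iInf_normalizer_le_normalizer_iSup _)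
  rcases le_or_disjoint_of_mem_minimalNormalIn hT hAD with hle | hdisj
  · exact hle
  have hTD : T ≤ centralizer (sSup s : Subgroup G) := le_centralizer_of_le_normalizer_of_disjoint
    (hT.1.2.1.trans hAD) (hDA.trans hT.1.2.2) hdisj
  have hins : insert T s ⊆ minimalNormalIn A ∧
      (insert T s).Pairwise (fun H K => H ≤ centralizer K) := by
    refine ⟨Set.insert_subset hT hsA, Set.pairwise_insert.mpr ⟨hs, fun K hK _ => ?_⟩⟩
    have hTK : T ≤ centralizer K := hTD.trans (centralizer_le (le_sSup hK))
    exact ⟨hTK, le_centralizer_iff.mp hTK⟩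
  exact le_sSup (hmax hins (Set.subset_insert T s) (Set.mem_insert T s))

end minimalNormalIn

end Subgroup

theorem MulAut.ker_conjNormal (H : Subgroup G) [H.Normal] :
    (MulAut.conjNormal : G →* MulAut H).ker = centralizer H := by
  ext g
  simp [MonoidHom.mem_ker, mem_centralizer_iff, MulEquiv.ext_iff, Subtype.ext_iff,
    eq_mul_inv_iff_mul_eq, eq_comm]

/-- Nonabelian-ness of the simple factors is recorded as triviality of their centers. -/
structure IsCommutingNonabelianSimpleFamily (s : Set (Subgroup G)) : Prop where
  pairwise_le_centralizer : s.Pairwise fun H K => H ≤ centralizer K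
  isSimpleGroup : ∀ K ∈ s, IsSimpleGroup K
  disjoint_centralizer : ∀ K ∈ s, Disjoint K (centralizer K)

namespace IsCommutingNonabelianSimpleFamily

variable {s t : Set (Subgroup G)}

theorem empty : IsCommutingNonabelianSimpleFamily (∅ : Set (Subgroup G)) :=
  ⟨Set.pairwise_empty _, fun _ h => h.elim, fun _ h => h.elim⟩

theorem union (hs : IsCommutingNonabelianSimpleFamily s) (ht : IsCommutingNonabelianSimpleFamily t)
    (hst : ∀ H ∈ s, ∀ K ∈ t, H ≤ centralizer K) : IsCommutingNonabelianSimpleFamily (s ∪ t) where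
  pairwise_le_centralizer := Set.pairwise_union.mpr ⟨hs.1, ht.1, fun H hH K hK _ =>
    ⟨hst H hH K hK, le_centralizer_iff.mp (hst H hH K hK)⟩⟩
  isSimpleGroup K hK := hK.elim (hs.2 K) (ht.2 K)
  disjoint_centralizer K hK := hK.elim (hs.3 K) (ht.3 K)

theorem sSupIndep (hs : IsCommutingNonabelianSimpleFamily s) : sSupIndep s := fun K hK =>
  (hs.3 K hK).mono_right <| sSup_le fun _ hL => hs.1 hL.1 hK (Set.mem_singleton_iff.not.mp hL.2)

end IsCommutingNonabelianSimpleFamily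

theorem exists_isCommutingNonabelianSimpleFamily_sSup_eq [Finite G] {A : Subgroup G}
    (hA : Minimal (fun N : Subgroup G => N.Normal ∧ N ≠ ⊥) A) (hAc : ¬ A ≤ centralizer A) :
    ∃ s, IsCommutingNonabelianSimpleFamily s ∧ sSup s = A := by
  have : A.Normal := hA.1.1
  obtain ⟨s, hsA, hs, hall⟩ := exists_pairwise_le_centralizer_subset_minimalNormalIn A
  have hsup : sSup s = A := by
    obtain ⟨T, -, hT⟩ := exists_minimal_le_of_wellFoundedLT
      (fun H : Subgroup G => H ≠ ⊥ ∧ H ≤ A ∧ A ≤ normalizer H) A ⟨hA.1.2, le_rfl, le_normalizer⟩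
    have hle : sSup s ≤ A := sSup_le fun K hK => (hsA hK).1.2.1
    have hnormal : (sSup s).Normal := by
      rw [le_antisymm (sSup_le_sSup hsA) (sSup_le hall)]
      exact normal_sSup_of_map_conj_mem fun g T hT =>
        map_mem_minimalNormalIn _ (Normal.map_conj_eq A g) hT
    exact le_antisymm hle (hA.2 ⟨hnormal, ne_bot_of_le_ne_bot hT.1.1 (hall T hT)⟩ hle)
  have hsplit : ∀ K ∈ s, ∀ N ≤ K, K ≤ normalizer N → N = ⊥ ∨ N = K := by
    intro K hK N hNK hKN
    have hAN : A ≤ normalizer N := hsup ▸ sSup_le_of_pairwise_le_centralizer hs hK hKN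
      ((centralizer_le hNK).trans (centralizer_le_normalizer _))
    rcases le_or_disjoint_of_mem_minimalNormalIn (hsA hK) hAN with hle | hdisj
    · exact Or.inr (le_antisymm hNK hle)
    · exact Or.inl (hdisj.eq_bot_of_ge hNK)
  refine ⟨s, ⟨hs, fun K hK => isSimpleGroup_of_forall_le_normalizer (hsA hK).1.1 (hsplit K hK),
    fun K hK => ?_⟩, hsup⟩
  rcases hsplit K hK _ inf_le_left
    ((le_centralizer_iff.mp inf_le_right).trans (centralizer_le_normalizer _)) with hbot | habel
  · exact disjoint_iff.mpr hbot
  have hKc : K ≤ centralizer K := inf_eq_left.mp habel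
  have hKA : K ≤ A ⊓ centralizer A := le_inf (hsup ▸ le_sSup hK)
    (le_centralizer_iff.mp (hsup ▸ sSup_le_of_pairwise_le_centralizer hs hK hKc le_rfl))
  have hZ := hA.2 ⟨inferInstance, ne_bot_of_le_ne_bot (hsA hK).1.1 hKA⟩ inf_le_left
  exact absurd (hZ.trans inf_le_right) hAc

theorem exists_isCommutingNonabelianSimpleFamily_centralizer_sSup_eq_bot [Finite G]
    (h : ∀ N : Subgroup G, N.Normal → Group.IsSolvable N → N = ⊥) :
    ∃ s : Set (Subgroup G), IsCommutingNonabelianSimpleFamily s ∧ (sSup s).Normal ∧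
      centralizer ((sSup s : Subgroup G) : Set G) = ⊥ := by
  obtain ⟨s, ⟨hs, hSn⟩, hmax⟩ := exists_maximalFor_of_wellFoundedGT
    (fun s : Set (Subgroup G) => IsCommutingNonabelianSimpleFamily s ∧ (sSup s).Normal) sSup
    ⟨∅, .empty, by rw [sSup_empty]; infer_instance⟩
  have hmeet : ∀ B : Subgroup G, B.Normal → Disjoint (sSup s) B → B = ⊥ := by
    intro B hB hdisj
    by_contra hne
    obtain ⟨B', hB'B, hB'⟩ :=
      exists_minimal_le_of_wellFoundedLT (fun N : Subgroup G => N.Normal ∧ N ≠ ⊥) B ⟨hB, hne⟩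
    have : B'.Normal := hB'.1.1
    obtain ⟨t, ht, htB'⟩ := exists_isCommutingNonabelianSimpleFamily_sSup_eq hB'
      fun hc => hB'.1.2 (h B' this (isSolvable_of_le_centralizer hc))
    have hdisj' : Disjoint (sSup s) B' := hdisj.mono_right hB'B
    have hSB' : sSup s ≤ centralizer B' := le_centralizer_of_le_normalizer_of_disjoint
      le_normalizer_of_normal le_normalizer_of_normal hdisj'
    have hst : IsCommutingNonabelianSimpleFamily (s ∪ t) := hs.union ht fun H hH K hK =>
      (le_sSup hH).trans (hSB'.trans (centralizer_le (htB' ▸ le_sSup hK)))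
    have hle := hmax ⟨hst, by rw [sSup_union, htB']; infer_instance⟩
      (sSup_le_sSup Set.subset_union_left)
    rw [sSup_union, htB'] at hle
    exact hB'.1.2 (hdisj'.eq_bot_of_ge (le_sup_right.trans hle))
  refine ⟨s, hs, hSn, hmeet _ inferInstance (disjoint_iff.mpr (h _ inferInstance ?_))⟩
  exact isSolvable_of_le_centralizer (inf_le_right.trans (centralizer_le inf_le_left))

end

/-- Mattarei's Lemma: a finite group with no nontrivial solvable normal subgroup contains a
copy of a direct product `T₁^{n₁} × ⋯ × T_r^{n_r}` of non-abelian simple groups, and embeds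
into the automorphism group of this product. -/
theorem mattarei {G : Type*} [Group G] [Finite G]
    (h : ∀ N : Subgroup G, N.Normal → IsSolvable N → N = ⊥) :
    ∃ (r : ℕ) (T : Fin r → Type) (instT : ∀ i, Group (T i)) (n : Fin r → ℕ),
      (∀ i, Finite (T i)) ∧
      (∀ i, 1 ≤ n i) ∧
      (∀ i, IsSimpleGroup (T i)) ∧
      (∀ i, ∃ a b : T i, a * b ≠ b * a) ∧
      (∃ f : (∀ i, Fin (n i) → T i) →* G, Function.Injective f) ∧
      (∃ f : G →* MulAut (∀ i, Fin (n i) → T i), Function.Injective f) := by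
  obtain ⟨s, hs, hSn, hC⟩ := exists_isCommutingNonabelianSimpleFamily_centralizer_sSup_eq_bot h
  let e : Fin (Nat.card s) ≃ s := (Finite.equivFin s).symm
  let K : Fin (Nat.card s) → Subgroup G := fun i => e i
  have hcomm : Pairwise fun i j => ∀ x y : G, x ∈ K i → y ∈ K j → Commute x y :=
    fun i j hij x y hx hy => (mem_centralizer_iff.mp (hs.1 (e i).2 (e j).2
      (Subtype.coe_injective.ne (e.injective.ne hij)) hx) y hy).symm
  have hind : iSupIndep K := ((sSupIndep_iff s).mp hs.sSupIndep).comp e.injective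
  have hKs : ⨆ i, K i = sSup s := by rw [sSup_eq_iSup']; exact e.iSup_comp
  -- a local instance per factor, so that instance search sees through the `Shrink`s below
  have (i : Fin (Nat.card s)) : Small.{0} (K i) := inferInstance
  let Φ : (∀ i, Fin 1 → Shrink.{0} (K i)) ≃* (sSup s : Subgroup G) :=
    (MulEquiv.piCongrRight fun i => (MulEquiv.piUnique _).trans Shrink.mulEquiv).trans
      ((noncommPiCoprodEquiv hcomm hind).trans (MulEquiv.subgroupCongr hKs))
  have hsimple (i) : IsSimpleGroup (K i) := hs.2 _ (e i).2
  refine ⟨Nat.card s, fun i => Shrink.{0} (K i), fun i => inferInstance, fun _ => 1,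
    fun i => inferInstance, fun _ => le_rfl, fun i => Shrink.mulEquiv.isSimpleGroup, fun i => ?_,
    ⟨(sSup s).subtype.comp Φ.toMonoidHom, (sSup s).subtype_injective.comp Φ.injective⟩,
    ⟨(MulAut.congr Φ.symm).toMonoidHom.comp MulAut.conjNormal, ?_⟩⟩
  · obtain ⟨a, b, hab⟩ := exists_mul_ne_mul_of_disjoint_centralizer (hs.3 _ (e i).2)
    exact ⟨Shrink.mulEquiv.symm a, Shrink.mulEquiv.symm b, by
      rwa [← map_mul, ← map_mul, Shrink.mulEquiv.symm.injective.ne_iff]⟩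
  · refine (MulAut.congr Φ.symm).injective.comp ?_
    rw [← MonoidHom.ker_eq_bot_iff, MulAut.ker_conjNormal, hC]
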